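/- Let m > 0 and P ∈ ℝ^d. The minimum over k₁,…,kₙ ∈ ℝ^d of the symbol H₀⁽ⁿ⁾(P;k₁,…,kₙ) := ½(P - Σⱼ₌₁ⁿ kⱼ)² + Σⱼ₌₁ⁿ sqrt(m² + |kⱼ|²) is attained at k₁ = … = kₙ = (1/n)(|P| - c(n,P)) P/|P|, where c(n,P) ∈ [0,1) is the unique solution of c = (|P|-c)/sqrt(m²n²+(|P|-c)²), and equals ½ c(n,P)² + sqrt(m²n² + (|P| - c(n,P))²). -/

import Mathlib

/-!
Minkowski's inequality for the vectors `(m, kⱼ) ∈ ℝ × ℝ^d` bounds the dispersion part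
`∑ⱼ √(m² + |kⱼ|²)` below by `√(m²n² + |K|²)`, where `K = ∑ⱼ kⱼ`, and the reverse triangle
inequality bounds `½|P - K|²` below by `½(|P| - |K|)²`. What remains is the convex function
`s ↦ ½(|P| - s)² + √(m²n² + s²)`, whose derivative vanishes at `s = |P| - c` by the defining
equation of `c`, so its tangent line there bounds it below by its value there. Equal momenta `k⋆`
parallel to `P` attain the bound.
-/

open Finset Real

theorem sqrt_sq_sum_add_norm_sq_sum_le {ι E : Type*} [SeminormedAddCommGroup E]
    (s : Finset ι) (a : ι → ℝ) (f : ι → E) :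
    √((∑ i ∈ s, a i) ^ 2 + ‖∑ i ∈ s, f i‖ ^ 2) ≤ ∑ i ∈ s, √(a i ^ 2 + ‖f i‖ ^ 2) := by
  simpa [WithLp.prod_norm_eq_of_L2, ← WithLp.toLp_sum, Prod.fst_sum, Prod.snd_sum] using
    norm_sum_le s fun i ↦ WithLp.toLp 2 (a i, f i)

/-- `t / √(A + t²)` is the derivative of `s ↦ √(A + s²)` at `t`. -/
theorem sqrt_add_sq_add_tangent_le {A : ℝ} (hA : 0 ≤ A) (t s : ℝ) :
    √(A + t ^ 2) + t / √(A + t ^ 2) * (s - t) ≤ √(A + s ^ 2) := by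
  rcases (sqrt_nonneg (A + t ^ 2)).eq_or_lt with hR | hR
  · rw [← hR, div_zero, zero_mul, add_zero]
    exact sqrt_nonneg _
  have hR2 : √(A + t ^ 2) ^ 2 = A + t ^ 2 := sq_sqrt (by positivity)
  have cauchy_schwarz : A + t * s ≤ √(A + t ^ 2) * √(A + s ^ 2) := by
    rw [← sqrt_mul (by positivity)]
    exact (le_abs_self _).trans (abs_le_sqrt (by nlinarith [mul_nonneg hA (sq_nonneg (t - s))]))
  rw [← mul_le_mul_iff_right₀ hR]
  calc √(A + t ^ 2) * (√(A + t ^ 2) + t / √(A + t ^ 2) * (s - t))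
        = √(A + t ^ 2) ^ 2 + t * (s - t) := by field_simp
    _ = A + t * s := by rw [hR2]; ring
    _ ≤ _ := cauchy_schwarz

theorem half_sq_add_sqrt_le_of_critical {A p c : ℝ} (hA : 0 ≤ A)
    (hc : c = (p - c) / √(A + (p - c) ^ 2)) (s : ℝ) :
    c ^ 2 / 2 + √(A + (p - c) ^ 2) ≤ (p - s) ^ 2 / 2 + √(A + s ^ 2) := by
  have tangent := sqrt_add_sq_add_tangent_le hA (p - c) s
  rw [← hc] at tangent
  nlinarith [sq_nonneg (p - c - s)]

/-- `H₀⁽ⁿ⁾(P; k₁, …, kₙ)`. -/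
noncomputable def nelsonSymbol {E : Type*} [SeminormedAddCommGroup E] {n : ℕ} (m : ℝ) (P : E)
    (k : Fin n → E) : ℝ :=
  ‖P - ∑ j, k j‖ ^ 2 / 2 + ∑ j, √(m ^ 2 + ‖k j‖ ^ 2)

theorem le_nelsonSymbol {E : Type*} [SeminormedAddCommGroup E] {n : ℕ} {m c : ℝ} {P : E}
    (hc : c = (‖P‖ - c) / √(m ^ 2 * n ^ 2 + (‖P‖ - c) ^ 2)) (k : Fin n → E) :
    c ^ 2 / 2 + √(m ^ 2 * n ^ 2 + (‖P‖ - c) ^ 2) ≤ nelsonSymbol m P k := by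
  have minkowski : √(m ^ 2 * n ^ 2 + ‖∑ j, k j‖ ^ 2) ≤ ∑ j, √(m ^ 2 + ‖k j‖ ^ 2) := by
    simpa [mul_pow, mul_comm] using sqrt_sq_sum_add_norm_sq_sum_le univ (fun _ ↦ m) k
  have reverse_triangle : (‖P‖ - ‖∑ j, k j‖) ^ 2 ≤ ‖P - ∑ j, k j‖ ^ 2 := by
    simpa only [sq_abs] using pow_le_pow_left₀ (abs_nonneg _) (abs_norm_sub_norm_le P _) 2
  have := half_sq_add_sqrt_le_of_critical (by positivity) hc ‖∑ j, k j‖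
  unfold nelsonSymbol
  linarith

theorem nelsonSymbol_const_smul_normalize {E : Type*} [NormedAddCommGroup E] [NormedSpace ℝ E]
    {n : ℕ} (hn : n ≠ 0) (m t : ℝ) {P : E} (hP : P ≠ 0) :
    nelsonSymbol m P (fun _ : Fin n ↦ (t / n) • (‖P‖⁻¹ • P)) =
      (‖P‖ - t) ^ 2 / 2 + √(m ^ 2 * n ^ 2 + t ^ 2) := by
  have hp : ‖P‖ ≠ 0 := norm_ne_zero_iff.mpr hP
  have hn' : (n : ℝ) ≠ 0 := Nat.cast_ne_zero.mpr hn
  have total : P - ∑ _j : Fin n, (t / n) • (‖P‖⁻¹ • P) = ((‖P‖ - t) / ‖P‖) • P := by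
    rw [sum_const, card_fin, ← Nat.cast_smul_eq_nsmul ℝ, smul_smul, smul_smul, sub_div,
      div_self hp, sub_smul, one_smul]
    congr 2
    field_simp
  have each : ‖(t / n) • (‖P‖⁻¹ • P)‖ ^ 2 = (t / n) ^ 2 := by
    rw [norm_smul, norm_smul, norm_inv, norm_norm, inv_mul_cancel₀ hp, mul_one, norm_eq_abs,
      sq_abs]
  simp only [nelsonSymbol]
  rw [total, each, sum_const, card_fin, nsmul_eq_mul, norm_smul, mul_pow, norm_eq_abs, sq_abs]
  congr 1
  · field_simp
  · rw [show m ^ 2 * n ^ 2 + t ^ 2 = n ^ 2 * (m ^ 2 + (t / n) ^ 2) by field_simp,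
      sqrt_mul (by positivity), sqrt_sq n.cast_nonneg]

theorem min_symbol_nelson
    (d : ℕ) (m : ℝ) (n : ℕ) (hn : 1 ≤ n)
    (P : EuclideanSpace ℝ (Fin d)) (hP : P ≠ 0)
    (c : ℝ)
    (hceq : c = (‖P‖ - c) / Real.sqrt (m ^ 2 * (n : ℝ) ^ 2 + (‖P‖ - c) ^ 2))
    (kstar : EuclideanSpace ℝ (Fin d))
    (hkstar : kstar = ((‖P‖ - c) / (n : ℝ)) • (‖P‖⁻¹ • P)) :
    (∀ k : Fin n → EuclideanSpace ℝ (Fin d),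
        c ^ 2 / 2 + Real.sqrt (m ^ 2 * (n : ℝ) ^ 2 + (‖P‖ - c) ^ 2) ≤
          ‖P - ∑ j, k j‖ ^ 2 / 2 + ∑ j, Real.sqrt (m ^ 2 + ‖k j‖ ^ 2)) ∧
    ‖P - ∑ _j : Fin n, kstar‖ ^ 2 / 2 + ∑ _j : Fin n, Real.sqrt (m ^ 2 + ‖kstar‖ ^ 2)
      = c ^ 2 / 2 + Real.sqrt (m ^ 2 * (n : ℝ) ^ 2 + (‖P‖ - c) ^ 2) := by
  refine ⟨le_nelsonSymbol hceq, ?_⟩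
  have value := nelsonSymbol_const_smul_normalize (by omega : n ≠ 0) m (‖P‖ - c) hP
  rw [sub_sub_cancel] at value
  subst hkstar
  exact value
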